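/- Let G be a group, k ≥ 2, and let T be a planar binary rooted tree with m leaves (1 ≤ m ≤ k) colored by g₁, …, g_m ∈ G, and h ∈ Γ_a G for some a ≥ 1. Define Φ_j(T, g⃗, h) for each leaf index j by the inductive root-to-leaf procedure: Φ_{root edge} = h, and at each trivalent vertex with incoming value Φ and left/right subtree commutator values t_l, t_r (defined by reading each trivalent vertex as a group commutator), the value passed to the left edge is [Φ, (t_r^{-1})^{t_l}] and to the right edge is [Φ^{t_l^{-1}}, t_l^{t_r}], where x^y = yxy^{-1} and [x,y] = xyx^{-1}y^{-1}. Then Φ_j(T, g⃗, h) ∈ Γ_{a+m−1} G for every leaf j. -/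

import Mathlib

/-!
Each edge of the tree raises the lower-central-series degree of the value it carries: the value
passed down to a child is a commutator of the incoming value with a conjugate of the sibling's
value, and the sibling subtree with `s` leaves has value in `Γ_s G`. Since
`⁅Γ_i G, Γ_j G⁆ ≤ Γ_{i+j} G` (three subgroups lemma), descending past a sibling with `s` leaves
adds `s` to the degree, and along any root-to-leaf path the siblings together carry `m - 1` leaves.
-/

open scoped commutatorElement

/-- A planar binary rooted tree whose leaves are colored by elements of `G`. -/
inductive GTree (G : Type*) where
  | leaf (g : G) : GTree G
  | node (l r : GTree G) : GTree G

/-- The group element obtained by reading each trivalent vertex of the tree as a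
group commutator `[x,y] = xyx⁻¹y⁻¹`. -/
def GTree.val {G : Type*} [Group G] : GTree G → G
  | .leaf g => g
  | .node l r => ⁅l.val, r.val⁆

/-- The number of leaves of a tree. -/
def GTree.numLeaves {G : Type*} : GTree G → ℕ
  | .leaf _ => 1
  | .node l r => l.numLeaves + r.numLeaves

/-- Conjugation `x^y = y x y⁻¹`. -/
def conjBy {G : Type*} [Group G] (x y : G) : G := y * x * y⁻¹

/-- The list `(Φ_j(T, g⃗, h))_j` of values at the leaves (in left-to-right order) of
the inductive root-to-leaf procedure: the root edge carries `h`, and at each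
trivalent vertex with incoming value `Φ` and left/right subtree commutator values
`t_l = val l`, `t_r = val r`, the left edge receives `[Φ, (t_r⁻¹)^{t_l}]` and the
right edge receives `[Φ^{t_l⁻¹}, t_l^{t_r}]`. -/
def GTree.Phi {G : Type*} [Group G] : GTree G → G → List G
  | .leaf _, h => [h]
  | .node l r, h =>
      l.Phi ⁅h, conjBy (r.val)⁻¹ l.val⁆ ++
        r.Phi ⁅conjBy h (l.val)⁻¹, conjBy l.val r.val⁆

namespace Subgroup

variable {G : Type*} [Group G]

theorem commutator_commutator_le_of_rotate (N H₁ H₂ H₃ : Subgroup G) [N.Normal]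
    (h1 : ⁅⁅H₂, H₃⁆, H₁⁆ ≤ N) (h2 : ⁅⁅H₃, H₁⁆, H₂⁆ ≤ N) : ⁅⁅H₁, H₂⁆, H₃⁆ ≤ N := by
  let f := QuotientGroup.mk' N
  have le_iff : ∀ A B C : Subgroup G,
      ⁅⁅A, B⁆, C⁆ ≤ N ↔ ⁅⁅A.map f, B.map f⁆, C.map f⁆ = ⊥ := fun A B C => by
    rw [← map_commutator, ← map_commutator, map_eq_bot_iff, QuotientGroup.ker_mk']
  rw [le_iff]
  exact commutator_commutator_eq_bot_of_rotate ((le_iff _ _ _).mp h1) ((le_iff _ _ _).mp h2)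

theorem commutator_lowerCentralSeries_le (m n : ℕ) :
    ⁅(⊤ : Subgroup G).lowerCentralSeries m, (⊤ : Subgroup G).lowerCentralSeries n⁆ ≤
      (⊤ : Subgroup G).lowerCentralSeries (m + n + 1) := by
  induction n generalizing m with
  | zero => exact le_rfl
  | succ n ih =>
    rw [lowerCentralSeries_succ, commutator_comm]
    apply commutator_commutator_le_of_rotate
    · rw [commutator_comm ⊤, ← lowerCentralSeries_succ]
      exact (ih (m + 1)).trans (lowerCentralSeries_antitone _ (by omega))
    · exact commutator_mono (ih m) le_rfl

theorem commutator_mem_lowerCentralSeries {m n : ℕ} {x y : G}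
    (hx : x ∈ (⊤ : Subgroup G).lowerCentralSeries m)
    (hy : y ∈ (⊤ : Subgroup G).lowerCentralSeries n) :
    ⁅x, y⁆ ∈ (⊤ : Subgroup G).lowerCentralSeries (m + n + 1) :=
  commutator_lowerCentralSeries_le m n (commutator_mem_commutator hx hy)

theorem conjBy_mem {H : Subgroup G} [H.Normal] {x : G} (hx : x ∈ H) (y : G) : conjBy x y ∈ H :=
  Normal.conj_mem ‹_› x hx y

end Subgroup

namespace GTree

variable {G : Type*}

theorem one_le_numLeaves (T : GTree G) : 1 ≤ T.numLeaves := by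
  induction T with
  | leaf => exact le_rfl
  | node l r ihl => simp only [numLeaves]; omega

variable [Group G]

open Subgroup (commutator_mem_lowerCentralSeries conjBy_mem)

theorem val_mem_lowerCentralSeries (T : GTree G) :
    T.val ∈ (⊤ : Subgroup G).lowerCentralSeries (T.numLeaves - 1) := by
  induction T with
  | leaf g => exact Subgroup.mem_top g
  | node l r ihl ihr =>
    have := l.one_le_numLeaves
    have := r.one_le_numLeaves
    exact Subgroup.lowerCentralSeries_antitone _ (by simp only [numLeaves]; omega)
      (commutator_mem_lowerCentralSeries ihl ihr)

theorem mem_lowerCentralSeries_of_mem_Phi (T : GTree G) {n : ℕ} {h : G}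
    (hh : h ∈ (⊤ : Subgroup G).lowerCentralSeries n) :
    ∀ φ ∈ T.Phi h, φ ∈ (⊤ : Subgroup G).lowerCentralSeries (n + T.numLeaves - 1) := by
  induction T generalizing n h with
  | leaf g => simpa [Phi, numLeaves] using hh
  | node l r ihl ihr =>
    have := l.one_le_numLeaves
    have := r.one_le_numLeaves
    intro φ hφ
    rcases List.mem_append.mp hφ with hφ | hφ
    · have hleft := commutator_mem_lowerCentralSeries hh
        (conjBy_mem (inv_mem r.val_mem_lowerCentralSeries) l.val)
      exact Subgroup.lowerCentralSeries_antitone _ (by simp only [numLeaves]; omega)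
        (ihl hleft φ hφ)
    · have hright := commutator_mem_lowerCentralSeries (conjBy_mem hh l.val⁻¹)
        (conjBy_mem l.val_mem_lowerCentralSeries r.val)
      exact Subgroup.lowerCentralSeries_antitone _ (by simp only [numLeaves]; omega)
        (ihr hright φ hφ)

end GTree

theorem stmt19_general (G : Type*) [Group G]
    (T : GTree G)
    (a : ℕ) (h : G) (hh : h ∈ (⊤ : Subgroup G).lowerCentralSeries (a - 1)) :
    ∀ φ ∈ T.Phi h, φ ∈ (⊤ : Subgroup G).lowerCentralSeries (a + T.numLeaves - 2) := fun φ hφ =>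
  Subgroup.lowerCentralSeries_antitone _ (by omega) (T.mem_lowerCentralSeries_of_mem_Phi hh φ hφ)

/-- if `T` is a planar binary rooted tree with `m` leaves
(`1 ≤ m ≤ k`) colored by elements of `G` and `h ∈ Γ_a G` (`a ≥ 1`), then
`Φ_j(T, g⃗, h) ∈ Γ_{a+m−1} G` for every leaf `j`.
Here `Γ_j G = lowerCentralSeries G (j-1)`. -/
theorem stmt19 (G : Type*) [Group G] (k : ℕ) (hk : 2 ≤ k)
    (T : GTree G) (hT : T.numLeaves ≤ k)
    (a : ℕ) (ha : 1 ≤ a) (h : G) (hh : h ∈ (⊤ : Subgroup G).lowerCentralSeries (a - 1)) :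
    ∀ φ ∈ T.Phi h, φ ∈ (⊤ : Subgroup G).lowerCentralSeries (a + T.numLeaves - 2) :=
  stmt19_general G T a h hh
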